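/- arXiv:2101.10485 — 3 statements merged into one kernel-verified Lean document; each statement's English description precedes it below -/
import Mathlib

section
/- For any set A, Ev A satisfies the Int-sheaf gluing condition: given event streams (S,a) ∈ Ev A(ℓ) and (S',a') ∈ Ev A(ℓ') that are compatible at the common endpoint — i.e., ℓ ∈ S if and only if 0 ∈ S', and in that case a(ℓ) = a'(0) — there exists a unique event stream (T,c) ∈ Ev A(ℓ+ℓ') whose restriction along [0,ℓ] is (S,a) and whose restriction along [ℓ,ℓ+ℓ'] is (S',a'). -/
/-- A length-`ℓ` event stream of type `A`: a finite set `S ⊆ [0,ℓ]` of time-stamps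
together with an event map `S → A`. -/
structure Ev (A : Type) (ℓ : ℝ) where
  S : Finset ℝ
  hS : ∀ s ∈ S, s ∈ Set.Icc (0 : ℝ) ℓ
  val : {s : ℝ // s ∈ S} → A

/-- Restriction of an event stream along the subinterval `[t, t+ℓ'] ⊆ [0,ℓ]`:
keep the time-stamps in `[t, t+ℓ']`, translated by `-t`, with inherited values. -/
noncomputable def Ev.restrict {A : Type} {ℓ : ℝ} (e : Ev A ℓ) (t ℓ' : ℝ)
    (ht : 0 ≤ t) (hl : 0 ≤ ℓ') (h : t + ℓ' ≤ ℓ) : Ev A ℓ' where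
  S := (e.S.filter (fun s => t ≤ s ∧ s ≤ t + ℓ')).image (fun s => s - t)
  hS := by
    intro s hs
    simp only [Finset.mem_image, Finset.mem_filter] at hs
    obtain ⟨u, ⟨_, hu1, hu2⟩, rfl⟩ := hs
    exact Set.mem_Icc.mpr ⟨by linarith, by linarith⟩
  val := fun u => e.val ⟨u.1 + t, by
    obtain ⟨s, hs, hst⟩ := Finset.mem_image.mp u.2
    have hsu : u.1 + t = s := by linarith
    rw [hsu]
    exact (Finset.mem_filter.mp hs).1⟩

/-!
An event stream is the same thing as a finitely supported partial map `ℝ → Option A`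
vanishing outside `[0,ℓ]`. In that picture restriction is translation followed by
truncation, and the glued stream is `s ↦ e s <|> e' (s - ℓ)`; the compatibility
condition says exactly that `e ℓ = e' 0`, which is what makes both restrictions of the
glued stream come out right at the junction. Uniqueness holds because `[0,ℓ]` and
`[ℓ,ℓ+ℓ']` cover `[0,ℓ+ℓ']`.
-/

namespace Ev

variable {A : Type} {ℓ : ℝ}

noncomputable def get? (e : Ev A ℓ) (s : ℝ) : Option A :=
  if h : s ∈ e.S then some (e.val ⟨s, h⟩) else none

theorem get?_eq_none_of_notMem_Icc (e : Ev A ℓ) {s : ℝ} (hs : s ∉ Set.Icc 0 ℓ) :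
    e.get? s = none :=
  dif_neg fun h => hs (e.hS s h)

theorem get?_eq_get?_of_mem_iff {ℓ' : ℝ} {e : Ev A ℓ} {f : Ev A ℓ'} {s t : ℝ}
    (hmem : s ∈ e.S ↔ t ∈ f.S) (hval : ∀ hs ht, e.val ⟨s, hs⟩ = f.val ⟨t, ht⟩) :
    e.get? s = f.get? t := by
  by_cases hs : s ∈ e.S
  · simp [get?, hs, hmem.mp hs, hval]
  · simp [get?, hs, mt hmem.mpr hs]

theorem isSome_get? (e : Ev A ℓ) (s : ℝ) : (e.get? s).isSome ↔ s ∈ e.S := by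
  by_cases hs : s ∈ e.S <;> simp [get?, hs]

theorem ext_get? {e f : Ev A ℓ} (h : ∀ s, e.get? s = f.get? s) : e = f := by
  have hS : e.S = f.S := by
    ext s
    rw [← isSome_get?, h s, isSome_get?]
  obtain ⟨S, _, v⟩ := e
  obtain ⟨S', _, v'⟩ := f
  subst hS
  congr
  funext ⟨s, hs⟩
  simpa [get?, hs] using h s

theorem get?_restrict (e : Ev A ℓ) {t ℓ' : ℝ} (ht : 0 ≤ t) (hl : 0 ≤ ℓ') (h : t + ℓ' ≤ ℓ)
    {s : ℝ} (hs : s ∈ Set.Icc 0 ℓ') : (e.restrict t ℓ' ht hl h).get? s = e.get? (s + t) := by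
  refine get?_eq_get?_of_mem_iff ?_ fun _ _ => rfl
  simp only [restrict, Finset.mem_image, Finset.mem_filter]
  constructor
  · rintro ⟨u, ⟨hu, -⟩, rfl⟩
    rwa [sub_add_cancel]
  · intro hst
    exact ⟨s + t, ⟨hst, by linarith [hs.1], by linarith [hs.2]⟩, add_sub_cancel_right s t⟩

theorem get?_eq_get?_restrict (e : Ev A ℓ) {t ℓ' : ℝ} (ht : 0 ≤ t) (hl : 0 ≤ ℓ')
    (h : t + ℓ' ≤ ℓ) {s : ℝ} (hs : s ∈ Set.Icc t (t + ℓ')) :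
    e.get? s = (e.restrict t ℓ' ht hl h).get? (s - t) := by
  rw [get?_restrict _ _ _ _ ⟨by linarith [hs.1], by linarith [hs.2]⟩, sub_add_cancel]

theorem eq_of_restrict_eq {ℓ' : ℝ} (hℓ : 0 ≤ ℓ) (hℓ' : 0 ≤ ℓ') {g g' : Ev A (ℓ + ℓ')}
    (hleft : g.restrict 0 ℓ le_rfl hℓ (by linarith) = g'.restrict 0 ℓ le_rfl hℓ (by linarith))
    (hright : g.restrict ℓ ℓ' hℓ hℓ' le_rfl = g'.restrict ℓ ℓ' hℓ hℓ' le_rfl) : g = g' := by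
  refine ext_get? fun s => ?_
  by_cases hs₀ : s ∈ Set.Icc 0 ℓ
  · have hs : s ∈ Set.Icc 0 (0 + ℓ) := by rwa [zero_add]
    rw [get?_eq_get?_restrict g le_rfl hℓ (by linarith) hs,
      get?_eq_get?_restrict g' le_rfl hℓ (by linarith) hs, hleft]
  by_cases hs₁ : s ∈ Set.Icc ℓ (ℓ + ℓ')
  · rw [get?_eq_get?_restrict g hℓ hℓ' le_rfl hs₁, get?_eq_get?_restrict g' hℓ hℓ' le_rfl hs₁,
      hright]
  have hs : s ∉ Set.Icc 0 (ℓ + ℓ') := fun h =>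
    if hsℓ : s ≤ ℓ then hs₀ ⟨h.1, hsℓ⟩ else hs₁ ⟨(not_le.mp hsℓ).le, h.2⟩
  rw [get?_eq_none_of_notMem_Icc g hs, get?_eq_none_of_notMem_Icc g' hs]

noncomputable def glue {ℓ' : ℝ} (hℓ : 0 ≤ ℓ) (hℓ' : 0 ≤ ℓ') (e : Ev A ℓ) (e' : Ev A ℓ') :
    Ev A (ℓ + ℓ') where
  S := e.S ∪ e'.S.image (· + ℓ)
  hS := by
    intro s hs
    rcases Finset.mem_union.mp hs with h | h
    · have := e.hS s h
      exact ⟨this.1, by linarith [this.2]⟩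
    · obtain ⟨u, hu, rfl⟩ := Finset.mem_image.mp h
      have := e'.hS u hu
      exact ⟨by linarith [this.1], by linarith [this.2]⟩
  val u :=
    if h : u.1 ∈ e.S then e.val ⟨u.1, h⟩ else
      e'.val ⟨u.1 - ℓ, by
        obtain ⟨v, hv, hvu⟩ := Finset.mem_image.mp ((Finset.mem_union.mp u.2).resolve_left h)
        rwa [← hvu, add_sub_cancel_right]⟩

theorem get?_glue {ℓ' : ℝ} (hℓ : 0 ≤ ℓ) (hℓ' : 0 ≤ ℓ') (e : Ev A ℓ) (e' : Ev A ℓ') (s : ℝ) :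
    (glue hℓ hℓ' e e').get? s = (e.get? s).or (e'.get? (s - ℓ)) := by
  have hmem : s ∈ (glue hℓ hℓ' e e').S ↔ s ∈ e.S ∨ s - ℓ ∈ e'.S := by
    simp [glue, sub_eq_add_neg]
  by_cases hs : s ∈ e.S
  · rw [get?, dif_pos (hmem.mpr (Or.inl hs))]
    simp [get?, glue, hs]
  · by_cases hs' : s - ℓ ∈ e'.S
    · rw [get?, dif_pos (hmem.mpr (Or.inr hs'))]
      simp [get?, glue, hs, hs']
    · simp [get?, hs, hs', mt hmem.mp (by tauto)]

variable {ℓ' : ℝ} (hℓ : 0 ≤ ℓ) (hℓ' : 0 ≤ ℓ') {e : Ev A ℓ} {e' : Ev A ℓ'}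

theorem restrict_glue_left (hcompat : e.get? ℓ = e'.get? 0) :
    (glue hℓ hℓ' e e').restrict 0 ℓ le_rfl hℓ (by linarith) = e := by
  refine ext_get? fun s => ?_
  by_cases hs : s ∈ Set.Icc 0 ℓ
  · rw [get?_restrict _ _ _ _ hs, add_zero, get?_glue]
    rcases hs.2.lt_or_eq with hlt | rfl
    · rw [e'.get?_eq_none_of_notMem_Icc fun h => by linarith [h.1], Option.or_none]
    · rw [sub_self, ← hcompat, Option.or_self]
  · rw [get?_eq_none_of_notMem_Icc _ hs, get?_eq_none_of_notMem_Icc _ hs]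

theorem restrict_glue_right (hcompat : e.get? ℓ = e'.get? 0) :
    (glue hℓ hℓ' e e').restrict ℓ ℓ' hℓ hℓ' le_rfl = e' := by
  refine ext_get? fun s => ?_
  by_cases hs : s ∈ Set.Icc 0 ℓ'
  · rw [get?_restrict _ _ _ _ hs, get?_glue, add_sub_cancel_right]
    rcases hs.1.lt_or_eq with hlt | rfl
    · rw [e.get?_eq_none_of_notMem_Icc fun h => by linarith [h.2], Option.none_or]
    · rw [zero_add, hcompat, Option.or_self]
  · rw [get?_eq_none_of_notMem_Icc _ hs, get?_eq_none_of_notMem_Icc _ hs]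

end Ev

/-- For any set `A`, `Ev A` satisfies the `Int`-sheaf gluing condition: event streams
`(S,a) ∈ Ev A (ℓ)` and `(S',a') ∈ Ev A (ℓ')` compatible at the common endpoint
(`ℓ ∈ S ↔ 0 ∈ S'`, and in that case `a ℓ = a' 0`) glue to a unique event stream of
length `ℓ + ℓ'` restricting to `(S,a)` on `[0,ℓ]` and to `(S',a')` on `[ℓ,ℓ+ℓ']`. -/
theorem ev_gluing (A : Type) (ℓ ℓ' : ℝ) (hℓ : 0 ≤ ℓ) (hℓ' : 0 ≤ ℓ')
    (e : Ev A ℓ) (e' : Ev A ℓ')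
    (hmem : ℓ ∈ e.S ↔ 0 ∈ e'.S)
    (hval : ∀ (h1 : ℓ ∈ e.S) (h2 : 0 ∈ e'.S), e.val ⟨ℓ, h1⟩ = e'.val ⟨0, h2⟩) :
    ∃! g : Ev A (ℓ + ℓ'),
      g.restrict 0 ℓ le_rfl hℓ (by linarith) = e ∧
      g.restrict ℓ ℓ' hℓ hℓ' le_rfl = e' := by
  have hcompat : e.get? ℓ = e'.get? 0 := Ev.get?_eq_get?_of_mem_iff hmem hval
  have hleft := Ev.restrict_glue_left hℓ hℓ' hcompat
  have hright := Ev.restrict_glue_right hℓ hℓ' hcompat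
  refine ⟨Ev.glue hℓ hℓ' e e', ⟨hleft, hright⟩, ?_⟩
  rintro g ⟨hgl, hgr⟩
  exact Ev.eq_of_restrict_eq hℓ hℓ' (hgl.trans hleft.symm) (hgr.trans hright.symm)
end

section
/- For all sets A and B and every ℓ ≥ 0, the map sending a pair of event streams ((S,a),(T,b)) ∈ Ev A(ℓ) × Ev B(ℓ) to the event stream on S ∪ T with value a(t) ∈ A at t ∈ S \ T, value b(t) ∈ B at t ∈ T \ S, and value (a(t),b(t)) ∈ A × B at t ∈ S ∩ T, is a bijection Ev A(ℓ) × Ev B(ℓ) ≅ Ev(A ⊙ B)(ℓ), and this bijection commutes with the restriction maps (it is an isomorphism of Int-presheaves); hence Ev is a strong monoidal functor from (Set, ⊙, ∅) to (Int-sheaves, ×, 1). -/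
/-- The monoidal product `A ⊙ B := A + B + A × B` on sets. -/
abbrev odot (A B : Type) : Type := A ⊕ B ⊕ A × B

/-- Combine a pair of event streams of types `A` and `B` into a single event stream of
type `A ⊙ B` on the union of the time-stamp sets: value `a t` on `S \ T`, value `b t`
on `T \ S`, and value `(a t, b t)` on `S ∩ T`. -/
noncomputable def Ev.combine {A B : Type} {ℓ : ℝ} (e : Ev A ℓ) (f : Ev B ℓ) :
    Ev (odot A B) ℓ where
  S := e.S ∪ f.S
  hS := by
    intro s hs
    rcases Finset.mem_union.mp hs with h | h
    · exact e.hS s h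
    · exact f.hS s h
  val := fun u =>
    if h1 : u.1 ∈ e.S then
      if h2 : u.1 ∈ f.S then .inr (.inr (e.val ⟨u.1, h1⟩, f.val ⟨u.1, h2⟩))
      else .inl (e.val ⟨u.1, h1⟩)
    else .inr (.inl (f.val ⟨u.1, (Finset.mem_union.mp u.2).resolve_left h1⟩))

/-!
An event stream is the same thing as a partial function `ℝ → Option A` with finite support in
`[0, ℓ]` (`Ev.toFun` is injective). Under this identification `combine` acts pointwise through the
bijection `(1 + A) × (1 + B) ≃ 1 + A ⊙ B`, and restriction is precomposition with a translation,
which commutes with every pointwise operation sending `(none, none)` to `none`.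
-/

def optionProdEquivOptionOdot (A B : Type) : Option A × Option B ≃ Option (odot A B) where
  toFun
    | (none, none) => none
    | (some a, none) => some (.inl a)
    | (none, some b) => some (.inr (.inl b))
    | (some a, some b) => some (.inr (.inr (a, b)))
  invFun
    | none => (none, none)
    | some (.inl a) => (some a, none)
    | some (.inr (.inl b)) => (none, some b)
    | some (.inr (.inr (a, b))) => (some a, some b)
  left_inv := by rintro ⟨_ | _, _ | _⟩ <;> rfl
  right_inv := by rintro (_ | _ | _ | ⟨_, _⟩) <;> rfl

namespace Ev

variable {A B : Type} {ℓ : ℝ}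

noncomputable def toFun (e : Ev A ℓ) (s : ℝ) : Option A :=
  if h : s ∈ e.S then some (e.val ⟨s, h⟩) else none

theorem toFun_of_mem (e : Ev A ℓ) {s : ℝ} (h : s ∈ e.S) : e.toFun s = some (e.val ⟨s, h⟩) :=
  dif_pos h

theorem toFun_of_notMem (e : Ev A ℓ) {s : ℝ} (h : s ∉ e.S) : e.toFun s = none :=
  dif_neg h

theorem isSome_toFun (e : Ev A ℓ) (s : ℝ) : (e.toFun s).isSome ↔ s ∈ e.S := by
  by_cases h : s ∈ e.S <;> simp [toFun, h]

theorem toFun_injective : Function.Injective (toFun : Ev A ℓ → ℝ → Option A) := by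
  intro e e' h
  have hS : e.S = e'.S := Finset.ext fun s => by rw [← isSome_toFun, ← isSome_toFun, h]
  obtain ⟨S, _, v⟩ := e
  obtain ⟨S', _, v'⟩ := e'
  subst hS
  congr
  funext ⟨s, hs⟩
  simpa only [toFun, dif_pos hs, Option.some.injEq] using congrFun h s

noncomputable def ofFun (F : ℝ → Option A) (S : Finset ℝ) (hS : ∀ s ∈ S, s ∈ Set.Icc 0 ℓ) :
    Ev A ℓ where
  S := S.filter fun s => (F s).isSome
  hS s hs := hS s (Finset.mem_filter.mp hs).1
  val u := (F u).get (Finset.mem_filter.mp u.2).2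

theorem toFun_ofFun (F : ℝ → Option A) (S : Finset ℝ) (hS : ∀ s ∈ S, s ∈ Set.Icc 0 ℓ)
    (hF : ∀ s, (F s).isSome → s ∈ S) : (ofFun F S hS).toFun = F := by
  funext s
  by_cases h : (F s).isSome
  · have hs : s ∈ (ofFun F S hS).S := Finset.mem_filter.mpr ⟨hF s h, h⟩
    rw [toFun_of_mem _ hs]
    exact Option.some_get h
  · have hs : s ∉ (ofFun F S hS).S := fun hs => h (Finset.mem_filter.mp hs).2
    rw [toFun_of_notMem _ hs, Option.not_isSome_iff_eq_none.mp h]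

theorem toFun_combine (e : Ev A ℓ) (f : Ev B ℓ) (s : ℝ) :
    (e.combine f).toFun s = optionProdEquivOptionOdot A B (e.toFun s, f.toFun s) := by
  by_cases he : s ∈ e.S <;> by_cases hf : s ∈ f.S <;>
    simp [toFun, combine, he, hf, optionProdEquivOptionOdot]

theorem mem_restrict {t ℓ' : ℝ} (e : Ev A ℓ) (ht : 0 ≤ t) (hl : 0 ≤ ℓ') (h : t + ℓ' ≤ ℓ)
    (u : ℝ) : u ∈ (e.restrict t ℓ' ht hl h).S ↔ u + t ∈ e.S ∧ u ∈ Set.Icc 0 ℓ' := by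
  simp only [restrict, Finset.mem_image, Finset.mem_filter, Set.mem_Icc]
  constructor
  · rintro ⟨s, ⟨hs, hts, hst⟩, rfl⟩
    exact ⟨by simpa using hs, by linarith, by linarith⟩
  · rintro ⟨hm, h0, hu⟩
    exact ⟨u + t, ⟨hm, by linarith, by linarith⟩, by ring⟩

theorem toFun_restrict {t ℓ' : ℝ} (e : Ev A ℓ) (ht : 0 ≤ t) (hl : 0 ≤ ℓ') (h : t + ℓ' ≤ ℓ)
    (u : ℝ) : (e.restrict t ℓ' ht hl h).toFun u =
      if u ∈ Set.Icc 0 ℓ' then e.toFun (u + t) else none := by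
  by_cases hu : u ∈ (e.restrict t ℓ' ht hl h).S
  · obtain ⟨hut, hIcc⟩ := (mem_restrict e ht hl h u).mp hu
    rw [toFun_of_mem _ hu, if_pos hIcc, toFun_of_mem _ hut]
    rfl
  · rw [toFun_of_notMem _ hu]
    split_ifs with hIcc
    · exact (toFun_of_notMem _ fun hut => hu ((mem_restrict e ht hl h u).mpr ⟨hut, hIcc⟩)).symm
    · rfl

theorem combine_restrict (e : Ev A ℓ) (f : Ev B ℓ) (t ℓ' : ℝ) (ht : 0 ≤ t) (hl : 0 ≤ ℓ')
    (h : t + ℓ' ≤ ℓ) :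
    (e.restrict t ℓ' ht hl h).combine (f.restrict t ℓ' ht hl h) =
      (e.combine f).restrict t ℓ' ht hl h := by
  refine toFun_injective (funext fun u => ?_)
  simp only [toFun_combine, toFun_restrict]
  split_ifs <;> rfl

theorem combine_injective :
    Function.Injective fun p : Ev A ℓ × Ev B ℓ => p.1.combine p.2 := by
  rintro ⟨e, f⟩ ⟨e', f'⟩ h
  have hpt (s : ℝ) : (e.toFun s, f.toFun s) = (e'.toFun s, f'.toFun s) := by
    apply (optionProdEquivOptionOdot A B).injective
    simpa only [toFun_combine] using congrFun (congrArg toFun h) s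
  exact Prod.ext (toFun_injective (funext fun s => congrArg Prod.fst (hpt s)))
    (toFun_injective (funext fun s => congrArg Prod.snd (hpt s)))

theorem combine_surjective :
    Function.Surjective fun p : Ev A ℓ × Ev B ℓ => p.1.combine p.2 := by
  intro g
  set F := fun s => (optionProdEquivOptionOdot A B).symm (g.toFun s) with hF
  have hsupp (s : ℝ) (hs : s ∉ g.S) : F s = (none, none) := by
    simp only [hF, toFun_of_notMem g hs]
    rfl
  have hfst (s : ℝ) (hs : (F s).1.isSome) : s ∈ g.S := by
    by_contra hn
    simp [hsupp s hn] at hs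
  have hsnd (s : ℝ) (hs : (F s).2.isSome) : s ∈ g.S := by
    by_contra hn
    simp [hsupp s hn] at hs
  refine ⟨(ofFun (fun s => (F s).1) g.S g.hS, ofFun (fun s => (F s).2) g.S g.hS),
    toFun_injective (funext fun s => ?_)⟩
  rw [toFun_combine, toFun_ofFun _ _ _ hfst, toFun_ofFun _ _ _ hsnd]
  exact (optionProdEquivOptionOdot A B).apply_symm_apply (g.toFun s)

end Ev

theorem ev_strong_monoidal_general (A B : Type) (ℓ : ℝ) :
    Function.Bijective (fun p : Ev A ℓ × Ev B ℓ => p.1.combine p.2) ∧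
    (∀ (e : Ev A ℓ) (f : Ev B ℓ) (t ℓ' : ℝ) (ht : 0 ≤ t) (hl : 0 ≤ ℓ')
      (h : t + ℓ' ≤ ℓ),
      (e.restrict t ℓ' ht hl h).combine (f.restrict t ℓ' ht hl h)
        = (e.combine f).restrict t ℓ' ht hl h) :=
  ⟨⟨Ev.combine_injective, Ev.combine_surjective⟩, Ev.combine_restrict⟩

/-- For all sets `A`, `B` and every `ℓ ≥ 0`, combining event streams is a bijection
`Ev A (ℓ) × Ev B (ℓ) ≅ Ev (A ⊙ B) (ℓ)`, and this bijection commutes with the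
restriction maps; hence `Ev` is a strong monoidal functor
`(Set, ⊙, ∅) → (Int-sheaves, ×, 1)`. -/
theorem ev_strong_monoidal (A B : Type) (ℓ : ℝ) (hℓ : 0 ≤ ℓ) :
    Function.Bijective (fun p : Ev A ℓ × Ev B ℓ => p.1.combine p.2) ∧
    (∀ (e : Ev A ℓ) (f : Ev B ℓ) (t ℓ' : ℝ) (ht : 0 ≤ t) (hl : 0 ≤ ℓ')
      (h : t + ℓ' ≤ ℓ),
      (e.restrict t ℓ' ht hl h).combine (f.restrict t ℓ' ht hl h)
        = (e.combine f).restrict t ℓ' ht hl h) :=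
  ev_strong_monoidal_general A B ℓ
end

section
/- For any Int-presheaf A satisfying the Int-sheaf gluing condition and any ε > 0, the ε-extended presheaf A_ε defined by A_ε(ℓ) := A(ℓ+ε), with restriction along ↑t : ℓ' → ℓ given by A's restriction along ↑t : ℓ'+ε → ℓ+ε, is an Int-presheaf satisfying the Int-sheaf gluing condition. (This is the state sheaf of the ε-delay machine.) -/
open scoped NNReal

/-- An `Int`-presheaf: a functor `Int^op → Set`. Objects of `Int` are nonnegative reals
(durations) `ℓ`; a morphism `↑t : ℓ' → ℓ` is a translation with `t + ℓ' ≤ ℓ`. The data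
is a family of sets of sections together with restriction maps `res t ℓ'` (restriction
along `[t, t+ℓ'] ⊆ [0,ℓ]`) which respect identities and composition. -/
structure IntPresheaf where
  obj : ℝ≥0 → Type
  res : ∀ {ℓ : ℝ≥0} (t ℓ' : ℝ≥0), t + ℓ' ≤ ℓ → obj ℓ → obj ℓ'
  res_id : ∀ (ℓ : ℝ≥0) (x : obj ℓ), res 0 ℓ (by simp) x = x
  res_comp : ∀ {ℓ ℓ' ℓ'' : ℝ≥0} (s t : ℝ≥0) (h1 : s + ℓ' ≤ ℓ) (h2 : t + ℓ'' ≤ ℓ')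
    (h3 : s + t + ℓ'' ≤ ℓ) (x : obj ℓ),
    res t ℓ'' h2 (res s ℓ' h1 x) = res (s + t) ℓ'' h3 x

/-- The `Int`-sheaf gluing condition: sections `p ∈ P(ℓ)` and `p' ∈ P(ℓ')` agreeing at
the common endpoint (`p|[ℓ,ℓ] = p'|[0,0]`) glue to a unique section `q ∈ P(ℓ+ℓ')` with
`q|[0,ℓ] = p` and `q|[ℓ,ℓ+ℓ'] = p'`. -/
def GluingCondition (P : IntPresheaf) : Prop :=
  ∀ (ℓ ℓ' : ℝ≥0) (p : P.obj ℓ) (p' : P.obj ℓ'),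
    P.res ℓ 0 (by simp) p = P.res 0 0 (by simp) p' →
    ∃! q : P.obj (ℓ + ℓ'),
      P.res 0 ℓ (by simp) q = p ∧ P.res ℓ ℓ' le_rfl q = p'

/-- The `ε`-extended presheaf `A_ε` with `A_ε(ℓ) := A(ℓ + ε)`; restriction along
`↑t : ℓ' → ℓ` is given by `A`'s restriction along `↑t : ℓ' + ε → ℓ + ε`. This is the
state sheaf of the `ε`-delay machine. -/
def IntPresheaf.shift (A : IntPresheaf) (ε : ℝ≥0) : IntPresheaf where
  obj ℓ := A.obj (ℓ + ε)
  res t ℓ' h x := A.res t (ℓ' + ε)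
    (by rw [← add_assoc]; exact add_le_add h le_rfl) x
  res_id := by
    intro ℓ x
    exact A.res_id (ℓ + ε) x
  res_comp := by
    intro ℓ ℓ' ℓ'' s t h1 h2 h3 x
    exact A.res_comp s t _ _ _ x

/-! Compatible sections `p ∈ A(ℓ + ε)`, `p' ∈ A(ℓ' + ε)` of `A_ε` agree on an overlap of length
`ε`, so gluing `p` in `A` with the part of `p'` beyond the overlap yields a section of
`A(ℓ + ℓ' + ε)`. Uniqueness of gluing in `A` says that a section is determined by its
restrictions to the two sides of a split point; this identifies the glued section's tail with
`p'` and gives uniqueness in `A_ε`. -/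

namespace IntPresheaf

variable (A : IntPresheaf)

-- The total translation `u` is a free argument, so rewriting can produce a prescribed form
-- such as `res ℓ` instead of `res (ℓ + 0)`.
theorem res_res {L M N s t : ℝ≥0} (u : ℝ≥0) (hu : s + t = u) (h₁ : s + M ≤ L)
    (h₂ : t + N ≤ M) (x : A.obj L) :
    A.res t N h₂ (A.res s M h₁ x) =
      A.res u N (by rw [← hu, add_assoc]; exact (add_le_add le_rfl h₂).trans h₁) x := by
  subst hu
  exact A.res_comp s t h₁ h₂ _ x

theorem res_split_compatible {a b : ℝ≥0} (x : A.obj (a + b)) :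
    A.res a 0 (by simp) (A.res 0 a (by simp) x) = A.res 0 0 (by simp) (A.res a b le_rfl x) := by
  rw [A.res_res a (zero_add a), A.res_res a (add_zero a)]

end IntPresheaf

namespace GluingCondition

variable {A : IntPresheaf}

-- Splitting a length `L` with `a + b = L` avoids transporting sections between `A.obj (a + b)`
-- and `A.obj L`.
theorem exists_glue (hA : GluingCondition A) {a b L : ℝ≥0} (hL : a + b = L)
    {p : A.obj a} {p' : A.obj b}
    (h : A.res a 0 (by simp) p = A.res 0 0 (by simp) p') :
    ∃ q : A.obj L, A.res 0 a (by simp [← hL]) q = p ∧ A.res a b hL.le q = p' := by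
  subst hL
  exact (hA a b p p' h).exists

theorem ext (hA : GluingCondition A) {a b L : ℝ≥0} (hL : a + b = L) {x y : A.obj L}
    (h₀ : A.res 0 a (by simp [← hL]) x = A.res 0 a (by simp [← hL]) y)
    (h₁ : A.res a b hL.le x = A.res a b hL.le y) : x = y := by
  subst hL
  exact (hA a b _ _ (A.res_split_compatible x)).unique ⟨rfl, rfl⟩ ⟨h₀.symm, h₁.symm⟩

end GluingCondition

theorem shift_gluing_general (A : IntPresheaf) (ε : ℝ≥0)
    (hA : GluingCondition A) : GluingCondition (A.shift ε) := by
  rintro ℓ ℓ' (p : A.obj (ℓ + ε)) (p' : A.obj (ℓ' + ε)) hpp'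
  change A.res ℓ (0 + ε) _ p = A.res 0 (0 + ε) _ p' at hpp'
  show ∃! q : A.obj (ℓ + ℓ' + ε), A.res 0 (ℓ + ε) _ q = p ∧ A.res ℓ (ℓ' + ε) _ q = p'
  have overlap : A.res ℓ ε le_rfl p = A.res 0 ε (by simp) p' := by
    have := congrArg (A.res 0 ε (by simp)) hpp'
    rwa [A.res_res ℓ (add_zero ℓ), A.res_res 0 (add_zero 0)] at this
  have endpoint :
      A.res (ℓ + ε) 0 (by simp) p = A.res 0 0 (by simp) (A.res ε ℓ' (by simp [add_comm]) p') := by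
    have := congrArg (A.res ε 0 (by simp)) overlap
    rwa [A.res_res (ℓ + ε) rfl, A.res_res ε (zero_add ε), ← A.res_res ε (add_zero ε)] at this
  obtain ⟨q, hq₀, hq₁⟩ := hA.exists_glue (add_right_comm ℓ ε ℓ') endpoint
  refine ⟨q, ⟨hq₀, ?_⟩, fun (y : A.obj (ℓ + ℓ' + ε)) ⟨hy₀, hy₁⟩ => ?_⟩
  · apply hA.ext (add_comm ε ℓ')
    · rw [A.res_res ℓ (add_zero ℓ), ← overlap, ← hq₀, A.res_res ℓ (zero_add ℓ)]
    · rw [A.res_res (ℓ + ε) rfl, hq₁]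
  · apply hA.ext (add_right_comm ℓ ε ℓ')
    · rw [hy₀, hq₀]
    · rw [hq₁, ← hy₁, A.res_res (ℓ + ε) rfl]

/-- For any `Int`-presheaf `A` satisfying the `Int`-sheaf gluing condition and any
`ε > 0`, the `ε`-extended presheaf `A_ε` with `A_ε(ℓ) := A(ℓ + ε)` is an
`Int`-presheaf satisfying the `Int`-sheaf gluing condition. -/
theorem shift_gluing (A : IntPresheaf) (ε : ℝ≥0) (hε : 0 < ε)
    (hA : GluingCondition A) : GluingCondition (A.shift ε) :=
  shift_gluing_general A ε hA
end
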